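/- Let P*(n) be defined by the generating function ∑_{n≥0} P*(n) q^n = ∏_{i≥1}(1-q^i)^4 (1-q^{5i})^4. Then for all n ≥ 0, P*(2n+1) ≡ 0 (mod 4). -/

import Mathlib

open PowerSeries

/-- `f k` is the formal power series `∏_{i≥1} (1 - q^{k i})` over `ℤ`:
its `n`-th coefficient is the `n`-th coefficient of the partial product
`∏_{i=1}^{n+1} (1 - q^{k i})`, which stabilizes. -/
noncomputable def f (k : ℕ) : PowerSeries ℤ :=
  PowerSeries.mk fun n =>
    PowerSeries.coeff (R := ℤ) n
      (∏ i ∈ Finset.range (n + 1), (1 - (PowerSeries.X : PowerSeries ℤ) ^ (k * (i + 1))))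

/-- The multiplicative inverse `1 / f k` (the constant coefficient of `f k` is `1`). -/
noncomputable def finv (k : ℕ) : PowerSeries ℤ := PowerSeries.invOfUnit (f k) 1

/-!
Modulo 4 one has `(1 - x)^4 = (1 - x^2)^2 - 4x(1 - x)^2 ≡ (1 - x^2)^2`, hence
`f₁⁴ f₅⁴ ≡ (f₂ f₁₀)²`. The right-hand side is a series in `q²`, so all its odd
coefficients vanish. Since `f k` is an infinite product, the congruence is carried out
on partial products, modulo the ideal `(4, q^(2n+2))`, which is enough to control the
coefficient of `q^(2n+1)`.
-/

lemma one_sub_pow_four_eq_of_four_eq_zero {S : Type*} [CommRing S] (h4 : (4 : S) = 0) (x : S) :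
    (1 - x) ^ 4 = (1 - x ^ 2) ^ 2 := by
  linear_combination (-x * (1 - x) ^ 2) * h4

lemma dvd_coeff_of_mem_span_C_X_pow {R : Type*} [CommRing R] {a : R} {A : R⟦X⟧} {m n : ℕ}
    (hA : A ∈ Ideal.span {C a, X ^ m}) (hn : n < m) : a ∣ coeff n A := by
  obtain ⟨c, d, rfl⟩ := Ideal.mem_span_pair.1 hA
  have hd : coeff n (d * X ^ m) = 0 := by rw [coeff_mul_X_pow', if_neg (by omega)]
  rw [map_add, hd, add_zero, mul_comm, coeff_C_mul]
  exact dvd_mul_right a _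

lemma coeff_eq_zero_of_rescale_neg_one_eq {R : Type*} [CommRing R] [NoZeroDivisors R]
    [CharZero R] {A : R⟦X⟧} (hA : rescale (-1) A = A) {n : ℕ} (hn : Odd n) :
    coeff n A = 0 := by
  have := congrArg (coeff n) hA
  rwa [coeff_rescale, hn.neg_one_pow, neg_one_mul, CharZero.neg_eq_self_iff] at this

noncomputable def eulerProd (k m : ℕ) : ℤ⟦X⟧ :=
  ∏ i ∈ Finset.range m, (1 - X ^ (k * (i + 1)))

lemma X_pow_dvd_eulerProd_sub {k : ℕ} (hk : 0 < k) {m m' : ℕ} (h : m ≤ m') :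
    X ^ m ∣ eulerProd k m' - eulerProd k m := by
  induction m', h using Nat.le_induction with
  | base => simp
  | succ m' hm ih =>
    have hstep :
        eulerProd k (m' + 1) - eulerProd k m' = -(eulerProd k m' * X ^ (k * (m' + 1))) := by
      rw [eulerProd, eulerProd, Finset.prod_range_succ]; ring
    rw [← sub_add_sub_cancel _ (eulerProd k m'), hstep]
    refine dvd_add (Dvd.dvd.neg_right (Dvd.dvd.mul_left (pow_dvd_pow X ?_) _)) ih
    nlinarith

lemma X_pow_dvd_f_sub_eulerProd {k : ℕ} (hk : 0 < k) (m : ℕ) :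
    X ^ m ∣ f k - eulerProd k m := by
  refine X_pow_dvd_iff.2 fun n hn => ?_
  have htail :=
    X_pow_dvd_iff.1 (X_pow_dvd_eulerProd_sub hk (Nat.succ_le_of_lt hn)) n n.lt_succ_self
  rw [map_sub, sub_eq_zero] at htail ⊢
  rw [htail]
  exact coeff_mk _ _

lemma map_eulerProd_pow_four {S : Type*} [CommRing S] (h4 : (4 : S) = 0) (φ : ℤ⟦X⟧ →+* S)
    (k m : ℕ) : φ (eulerProd k m) ^ 4 = φ (eulerProd (2 * k) m) ^ 2 := by
  simp only [eulerProd, map_prod, ← Finset.prod_pow, map_sub, map_one]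
  refine Finset.prod_congr rfl fun i _ => ?_
  rw [one_sub_pow_four_eq_of_four_eq_zero h4, ← map_pow, ← pow_mul, mul_right_comm, mul_comm 2]

lemma rescale_neg_one_eulerProd {k : ℕ} (hk : Even k) (m : ℕ) :
    rescale (-1) (eulerProd k m) = eulerProd k m := by
  simp only [eulerProd, map_prod, map_sub, map_one, map_pow, rescale_neg_one_X,
    (hk.mul_right _).neg_pow]

theorem stmt0 : ∀ n : ℕ, (4 : ℤ) ∣ PowerSeries.coeff (R := ℤ) (2 * n + 1) (f 1 ^ 4 * f 5 ^ 4) := by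
  intro n
  set I : Ideal ℤ⟦X⟧ := Ideal.span {C 4, X ^ (2 * n + 2)}
  have hf : ∀ k, 0 < k →
      Ideal.Quotient.mk I (f k) = Ideal.Quotient.mk I (eulerProd k (2 * n + 2)) :=
    fun k hk => Ideal.Quotient.eq.2 <|
      I.mem_of_dvd (X_pow_dvd_f_sub_eulerProd hk _) (Ideal.subset_span (by simp))
  have h4 : (4 : ℤ⟦X⟧ ⧸ I) = 0 := by
    rw [← map_ofNat (Ideal.Quotient.mk I), ← map_ofNat C, Ideal.Quotient.eq_zero_iff_mem]
    exact Ideal.subset_span (by simp)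
  have hmod : Ideal.Quotient.mk I (f 1 ^ 4 * f 5 ^ 4) =
      Ideal.Quotient.mk I ((eulerProd 2 (2 * n + 2) * eulerProd 10 (2 * n + 2)) ^ 2) := by
    simp only [map_mul, map_pow, hf 1 one_pos, hf 5 (by norm_num),
      map_eulerProd_pow_four h4]
    ring
  have hdvd := dvd_coeff_of_mem_span_C_X_pow (Ideal.Quotient.eq.1 hmod) (Nat.lt_succ_self _)
  have hodd :
      coeff (2 * n + 1) ((eulerProd 2 (2 * n + 2) * eulerProd 10 (2 * n + 2)) ^ 2) = 0 :=
    coeff_eq_zero_of_rescale_neg_one_eq (by simp only [map_pow, map_mul,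
      rescale_neg_one_eulerProd even_two, rescale_neg_one_eulerProd (by decide : Even 10)])
      (odd_two_mul_add_one n)
  rwa [map_sub, hodd, sub_zero] at hdvd
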